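/- Let (A, C, B) be a recollement of abelian categories. Then the following are equivalent: (a) i^! is an exact functor; (b) i^* j_* = 0; (c) i^* j_* j^* = 0. -/
import Mathlib


open CategoryTheory CategoryTheory.Limits

universe v₁ v₂ v₃ u₁ u₂ u₃

/-- A recollement of abelian categories `(𝒜, 𝒞, ℬ)`, consisting of additive functors
`i_* : 𝒜 ⥤ 𝒞`, `i^*, i^! : 𝒞 ⥤ 𝒜`, `j^* : 𝒞 ⥤ ℬ`, `j_!, j_* : ℬ ⥤ 𝒞` with adjoint pairs
`(i^*, i_*)`, `(i_*, i^!)`, `(j_!, j^*)`, `(j^*, j_*)`, with `i_*`, `j_!`, `j_*` fully faithful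
and the essential image of `i_*` equal to the kernel of `j^*`. -/
structure Recollement (𝒜 : Type u₁) (𝒞 : Type u₂) (ℬ : Type u₃)
    [Category.{v₁} 𝒜] [Category.{v₂} 𝒞] [Category.{v₃} ℬ]
    [Abelian 𝒜] [Abelian 𝒞] [Abelian ℬ] where
  /-- the functor `i^* : 𝒞 ⥤ 𝒜` -/
  iStar : 𝒞 ⥤ 𝒜
  /-- the functor `i_* : 𝒜 ⥤ 𝒞` -/
  iIns : 𝒜 ⥤ 𝒞
  /-- the functor `i^! : 𝒞 ⥤ 𝒜` -/
  iShriek : 𝒞 ⥤ 𝒜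
  /-- the functor `j_! : ℬ ⥤ 𝒞` -/
  jShriek : ℬ ⥤ 𝒞
  /-- the functor `j^* : 𝒞 ⥤ ℬ` -/
  jStar : 𝒞 ⥤ ℬ
  /-- the functor `j_* : ℬ ⥤ 𝒞` -/
  jIns : ℬ ⥤ 𝒞
  iStar_additive : iStar.Additive
  iIns_additive : iIns.Additive
  iShriek_additive : iShriek.Additive
  jShriek_additive : jShriek.Additive
  jStar_additive : jStar.Additive
  jIns_additive : jIns.Additive
  /-- the adjunction `i^* ⊣ i_*` -/
  adj₁ : iStar ⊣ iIns
  /-- the adjunction `i_* ⊣ i^!` -/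
  adj₂ : iIns ⊣ iShriek
  /-- the adjunction `j_! ⊣ j^*` -/
  adj₃ : jShriek ⊣ jStar
  /-- the adjunction `j^* ⊣ j_*` -/
  adj₄ : jStar ⊣ jIns
  iIns_full : iIns.Full
  iIns_faithful : iIns.Faithful
  jShriek_full : jShriek.Full
  jShriek_faithful : jShriek.Faithful
  jIns_full : jIns.Full
  jIns_faithful : jIns.Faithful
  /-- `im i_* = ker j^*` -/
  im_eq_ker : ∀ X : 𝒞, IsZero (jStar.obj X) ↔ ∃ A₀ : 𝒜, Nonempty (iIns.obj A₀ ≅ X)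

variable {𝒜 : Type u₁} {𝒞 : Type u₂} {ℬ : Type u₃}
  [Category.{v₁} 𝒜] [Category.{v₂} 𝒞] [Category.{v₃} ℬ]
  [Abelian 𝒜] [Abelian 𝒞] [Abelian ℬ]

/-- `0 ⟶ X ⟶ Y ⟶ Z ⟶ 0` is a short exact sequence. -/
def IsSES {𝒟 : Type*} [Category 𝒟] [Abelian 𝒟] {X Y Z : 𝒟}
    (f : X ⟶ Y) (g : Y ⟶ Z) : Prop :=
  ∃ w : f ≫ g = 0, (ShortComplex.mk f g w).ShortExact

namespace Recollement

variable (R : Recollement 𝒜 𝒞 ℬ)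

lemma jStar_iIns_isZero (A : 𝒜) : IsZero (R.jStar.obj (R.iIns.obj A)) :=
  (R.im_eq_ker _).mpr ⟨A, ⟨Iso.refl _⟩⟩

lemma hom_jIns_iIns_eq_zero {Y : ℬ} {T : 𝒜}
    (h : IsZero (R.iStar.obj (R.jIns.obj Y))) (f : R.jIns.obj Y ⟶ R.iIns.obj T) : f = 0 := by
  haveI := R.iIns_additive
  have hf : f = (R.adj₁.homEquiv _ _) ((R.adj₁.homEquiv _ _).symm f) :=
    (Equiv.apply_symm_apply _ _).symm
  rw [hf, h.eq_of_src ((R.adj₁.homEquiv _ _).symm f) 0, Adjunction.homEquiv_unit,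
    Functor.map_zero, comp_zero]

lemma hom_to_iShriek_jIns_eq_zero {W : 𝒜} {Y : ℬ} (f : W ⟶ R.iShriek.obj (R.jIns.obj Y)) :
    f = 0 := by
  haveI := R.iIns_additive; haveI := R.jIns_additive; haveI := R.iShriek_additive
  have h2 : (R.adj₂.homEquiv _ _).symm f
      = (R.adj₄.homEquiv _ _) ((R.adj₄.homEquiv _ _).symm ((R.adj₂.homEquiv _ _).symm f)) :=
    (Equiv.apply_symm_apply _ _).symm
  rw [(R.jStar_iIns_isZero W).eq_of_src ((R.adj₄.homEquiv _ _).symm ((R.adj₂.homEquiv _ _).symm f))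
    0, Adjunction.homEquiv_unit, Functor.map_zero, comp_zero] at h2
  have hf : f = (R.adj₂.homEquiv _ _) ((R.adj₂.homEquiv _ _).symm f) :=
    (Equiv.apply_symm_apply _ _).symm
  rw [hf, h2, Adjunction.homEquiv_unit, Functor.map_zero, comp_zero]

lemma iShriek_jIns_isZero (Y : ℬ) : IsZero (R.iShriek.obj (R.jIns.obj Y)) :=
  (IsZero.iff_id_eq_zero _).mpr (R.hom_to_iShriek_jIns_eq_zero _)

lemma counit_comp_unit_zero (X : 𝒞) :
    R.adj₂.counit.app X ≫ R.adj₄.unit.app X = 0 := by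
  haveI := R.jIns_additive; haveI := R.jStar_additive
  have h := R.adj₄.unit.naturality (R.adj₂.counit.app X)
  simp only [Functor.id_map, Functor.comp_map, Functor.id_obj, Functor.comp_obj] at h
  rw [h, IsZero.eq_zero_of_tgt (R.jIns.map_isZero (R.jStar_iIns_isZero _))
    (R.adj₄.unit.app _), zero_comp]

lemma isIso_jStar_map_unit (X : 𝒞) : IsIso (R.jStar.map (R.adj₄.unit.app X)) := by
  haveI := R.jIns_full; haveI := R.jIns_faithful
  exact isIso_of_comp_hom_eq_id _ (R.adj₄.left_triangle_components X)

/-- Any morphism killed by the unit of `j^* ⊣ j_*` factors through the counit of `i_* ⊣ i^!`. -/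
lemma exists_fac_counit {X W : 𝒞} (r : W ⟶ X) (hr : r ≫ R.adj₄.unit.app X = 0) :
    ∃ t : W ⟶ R.iIns.obj (R.iShriek.obj X), t ≫ R.adj₂.counit.app X = r := by
  haveI : IsIso (R.jStar.map (R.adj₄.unit.app X)) := R.isIso_jStar_map_unit X
  haveI : PreservesLimitsOfSize.{0,0} R.jStar := R.adj₃.rightAdjoint_preservesLimits
  have hK : IsZero (R.jStar.obj (kernel (R.adj₄.unit.app X))) :=
    IsZero.of_iso (IsZero.of_iso (isZero_zero ℬ)
      (kernel.ofMono (R.jStar.map (R.adj₄.unit.app X))))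
      (PreservesKernel.iso R.jStar (R.adj₄.unit.app X))
  obtain ⟨A₀, ⟨φ⟩⟩ := (R.im_eq_ker _).mp hK
  have ha := Equiv.symm_apply_apply (R.adj₂.homEquiv A₀ X)
    (φ.hom ≫ kernel.ι (R.adj₄.unit.app X))
  rw [Adjunction.homEquiv_counit] at ha
  refine ⟨kernel.lift _ r hr ≫ φ.inv ≫ R.iIns.map ((R.adj₂.homEquiv A₀ X)
    (φ.hom ≫ kernel.ι _)), ?_⟩
  rw [Category.assoc, Category.assoc, ha, Iso.inv_hom_id_assoc, kernel.lift_ι]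

lemma mono_counit (X : 𝒞) : Mono (R.adj₂.counit.app X) := by
  haveI := R.iIns_full; haveI := R.iIns_faithful; haveI := R.iIns_additive
  haveI : PreservesLimitsOfSize.{0,0} R.jStar := R.adj₃.rightAdjoint_preservesLimits
  set ε : R.iIns.obj (R.iShriek.obj X) ⟶ X := R.adj₂.counit.app X with hεdef
  have hz : IsZero (R.jStar.obj (kernel ε)) := by
    have h0 : IsZero (kernel (R.jStar.map ε)) :=
      IsZero.of_mono_eq_zero (kernel.ι (R.jStar.map ε))
        (IsZero.eq_zero_of_tgt (R.jStar_iIns_isZero _) _)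
    exact IsZero.of_iso h0 (PreservesKernel.iso R.jStar ε)
  obtain ⟨A₀, ⟨φ⟩⟩ := (R.im_eq_ker _).mp hz
  obtain ⟨u, hu⟩ := R.iIns.map_surjective (φ.hom ≫ kernel.ι ε)
  have hsymm : (R.adj₂.homEquiv A₀ X).symm u = (R.adj₂.homEquiv A₀ X).symm 0 := by
    rw [Adjunction.homEquiv_counit, Adjunction.homEquiv_counit, hu, Functor.map_zero, zero_comp,
      Category.assoc, kernel.condition, comp_zero]
  have hu0 : u = 0 := (R.adj₂.homEquiv A₀ X).symm.injective hsymm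
  apply Preadditive.mono_of_kernel_zero
  calc kernel.ι ε = φ.inv ≫ (φ.hom ≫ kernel.ι ε) := by rw [Iso.inv_hom_id_assoc]
  _ = 0 := by rw [← hu, hu0, Functor.map_zero, comp_zero]

lemma epi_unit (hb : ∀ Y : ℬ, IsZero (R.iStar.obj (R.jIns.obj Y))) (X : 𝒞) :
    Epi (R.adj₄.unit.app X) := by
  haveI : IsIso (R.jStar.map (R.adj₄.unit.app X)) := R.isIso_jStar_map_unit X
  haveI : PreservesColimitsOfSize.{0,0} R.jStar := R.adj₄.leftAdjoint_preservesColimits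
  set η : X ⟶ R.jIns.obj (R.jStar.obj X) := R.adj₄.unit.app X with hηdef
  have hz : IsZero (R.jStar.obj (cokernel η)) :=
    IsZero.of_iso (IsZero.of_iso (isZero_zero ℬ) (cokernel.ofEpi (R.jStar.map η)))
      (PreservesCokernel.iso R.jStar η)
  obtain ⟨A', ⟨φ⟩⟩ := (R.im_eq_ker _).mp hz
  have h0 : cokernel.π η ≫ φ.inv = 0 := R.hom_jIns_iIns_eq_zero (hb _) _
  apply Preadditive.epi_of_cokernel_zero
  calc cokernel.π η = (cokernel.π η ≫ φ.inv) ≫ φ.hom := by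
        rw [Category.assoc, Iso.inv_hom_id, Category.comp_id]
  _ = 0 := by rw [h0, zero_comp]

lemma epi_iShriek_map (hb : ∀ Y : ℬ, IsZero (R.iStar.obj (R.jIns.obj Y)))
    {X X' : 𝒞} (f : X ⟶ X') [Epi f] : Epi (R.iShriek.map f) := by
  haveI := R.iIns_faithful; haveI := R.iIns_additive
  haveI := R.jIns_additive; haveI := R.jStar_additive; haveI := R.iShriek_additive
  haveI : PreservesLimitsOfSize.{0,0} R.jIns := R.adj₄.rightAdjoint_preservesLimits
  set η : X ⟶ R.jIns.obj (R.jStar.obj X) := R.adj₄.unit.app X with hηdef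
  set η' : X' ⟶ R.jIns.obj (R.jStar.obj X') := R.adj₄.unit.app X' with hη'def
  set ε : R.iIns.obj (R.iShriek.obj X) ⟶ X := R.adj₂.counit.app X with hεdef
  set ε' : R.iIns.obj (R.iShriek.obj X') ⟶ X' := R.adj₂.counit.app X' with hε'def
  haveI : Mono ε' := R.mono_counit X'
  haveI : Epi η := R.epi_unit hb X
  have hnat : f ≫ η' = η ≫ R.jIns.map (R.jStar.map f) := by
    have h := R.adj₄.unit.naturality f
    simpa only [Functor.id_map, Functor.comp_map, Functor.id_obj, Functor.comp_obj,
      hηdef, hη'def] using h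
  have hnat₂ : R.iIns.map (R.iShriek.map f) ≫ ε' = ε ≫ f := by
    have h := R.adj₂.counit.naturality f
    simpa only [Functor.id_map, Functor.comp_map, Functor.id_obj, Functor.comp_obj,
      hεdef, hε'def] using h
  set kk := kernel.ι (R.jIns.map (R.jStar.map f)) with hkkdef
  -- construct `r`
  have hr0 : (pullback.fst η kk ≫ f) ≫ η' = 0 := by
    rw [Category.assoc, hnat, ← Category.assoc, pullback.condition, Category.assoc, hkkdef,
      kernel.condition, comp_zero]
  obtain ⟨r, hr⟩ := R.exists_fac_counit (pullback.fst η kk ≫ f) hr0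
  -- `r` is an epimorphism
  have hβ : (pullback.fst f ε' ≫ η) ≫ R.jIns.map (R.jStar.map f) = 0 := by
    rw [Category.assoc, ← hnat, ← Category.assoc, pullback.condition, Category.assoc,
      hε'def, R.counit_comp_unit_zero X', comp_zero]
  have hukk : pullback.fst f ε' ≫ η = kernel.lift _ (pullback.fst f ε' ≫ η) hβ ≫ kk := by
    rw [hkkdef, kernel.lift_ι]
  have hu : pullback.lift _ _ hukk ≫ r = pullback.snd f ε' := by
    rw [← cancel_mono ε', Category.assoc, hr, ← Category.assoc, ← pullback.condition,
      Category.assoc, ← Category.assoc, pullback.lift_fst]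
  haveI : Epi (pullback.lift _ _ hukk ≫ r) := by rw [hu]; infer_instance
  haveI : Epi r := epi_of_epi (pullback.lift _ _ hukk) r
  -- the kernel of the second projection factors through `ε`
  have hs : (kernel.ι (pullback.snd η kk) ≫ pullback.fst η kk) ≫ η = 0 := by
    rw [Category.assoc, pullback.condition, ← Category.assoc, kernel.condition, zero_comp]
  obtain ⟨t, ht⟩ := R.exists_fac_counit _ hs
  -- conclusion
  apply Preadditive.epi_of_cancel_zero
  intro T g hg
  have h₁ : kernel.ι (pullback.snd η kk) ≫ r = t ≫ R.iIns.map (R.iShriek.map f) := by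
    rw [← cancel_mono ε', Category.assoc, Category.assoc, hr, hnat₂, ← Category.assoc,
      ← Category.assoc, ht]
  have h₂ : kernel.ι (pullback.snd η kk) ≫ (r ≫ R.iIns.map g) = 0 := by
    rw [← Category.assoc, h₁, Category.assoc, ← Functor.map_comp, hg, Functor.map_zero,
      comp_zero]
  have hδ := Abelian.comp_epiDesc (pullback.snd η kk) (r ≫ R.iIns.map g) h₂
  have hδ0 : Abelian.epiDesc (pullback.snd η kk) (r ≫ R.iIns.map g) h₂ = 0 := by
    set ψ := PreservesKernel.iso R.jIns (R.jStar.map f) with hψdef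
    set δ := Abelian.epiDesc (pullback.snd η kk) (r ≫ R.iIns.map g) h₂ with hδdef
    have hz : ψ.hom ≫ δ = 0 := R.hom_jIns_iIns_eq_zero (hb _) _
    calc δ = ψ.inv ≫ (ψ.hom ≫ δ) := by rw [Iso.inv_hom_id_assoc]
    _ = 0 := by rw [hz, comp_zero]
  rw [hδ0, comp_zero] at hδ
  have hδ' : r ≫ R.iIns.map g = r ≫ 0 := by rw [← hδ, comp_zero]
  have hg0 : R.iIns.map g = 0 := by rwa [cancel_epi r] at hδ'
  exact R.iIns.map_injective (by rw [hg0, Functor.map_zero])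

lemma two_to_one (hb : ∀ Y : ℬ, IsZero (R.iStar.obj (R.jIns.obj Y))) :
    Nonempty (PreservesFiniteLimits R.iShriek) ∧
      Nonempty (PreservesFiniteColimits R.iShriek) := by
  haveI := R.iShriek_additive
  haveI : PreservesLimitsOfSize.{0,0} R.iShriek := R.adj₂.rightAdjoint_preservesLimits
  haveI : R.iShriek.PreservesEpimorphisms :=
    ⟨fun f _ => R.epi_iShriek_map hb f⟩
  haveI : ∀ {U V : 𝒞} (f : U ⟶ V), PreservesLimit (parallelPair f 0) R.iShriek :=
    fun f => inferInstance
  haveI := R.iShriek.preservesHomology_of_preservesEpis_and_kernels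
  exact ⟨⟨inferInstance⟩, ⟨R.iShriek.preservesFiniteColimits_of_preservesHomology⟩⟩

lemma one_to_two
    (h : Nonempty (PreservesFiniteLimits R.iShriek) ∧
      Nonempty (PreservesFiniteColimits R.iShriek)) :
    ∀ Y : ℬ, IsZero (R.iStar.obj (R.jIns.obj Y)) := by
  obtain ⟨-, ⟨hc⟩⟩ := h
  haveI := hc
  haveI := R.iStar_additive; haveI := R.iIns_additive; haveI := R.iShriek_additive
  haveI := R.iIns_full; haveI := R.iIns_faithful
  haveI : R.jStar.PreservesMonomorphisms :=
    Functor.preservesMonomorphisms_of_adjunction R.adj₃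
  intro Y
  have key : ∀ (T : 𝒜) (f : R.jIns.obj Y ⟶ R.iIns.obj T), f = 0 := by
    intro T f
    have hm : IsZero (R.jStar.obj (image f)) :=
      IsZero.of_mono_eq_zero (R.jStar.map (image.ι f))
        (IsZero.eq_zero_of_tgt (R.jStar_iIns_isZero T) _)
    obtain ⟨B, ⟨φ⟩⟩ := (R.im_eq_ker _).mp hm
    have h1 : IsZero (R.iShriek.obj (image f)) := by
      have h0 : R.iShriek.map (factorThruImage f) = 0 :=
        IsZero.eq_zero_of_src (R.iShriek_jIns_isZero Y) _
      haveI : Epi (R.iShriek.map (factorThruImage f)) := R.iShriek.map_epi _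
      exact IsZero.of_epi_eq_zero (R.iShriek.map (factorThruImage f)) h0
    have hB : IsZero B :=
      IsZero.of_iso h1 (asIso (R.adj₂.unit.app B) ≪≫ R.iShriek.mapIso φ)
    have hImg : IsZero (image f) := IsZero.of_iso (R.iIns.map_isZero hB) φ.symm
    rw [← image.fac f, IsZero.eq_zero_of_src hImg (image.ι f), comp_zero]
  rw [IsZero.iff_id_eq_zero]
  have h2 : (𝟙 (R.iStar.obj (R.jIns.obj Y)))
      = (R.adj₁.homEquiv _ _).symm ((R.adj₁.homEquiv _ _) (𝟙 _)) :=
    (Equiv.symm_apply_apply _ _).symm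
  rw [h2, key _ ((R.adj₁.homEquiv _ _) (𝟙 _)), Adjunction.homEquiv_counit,
    Functor.map_zero, zero_comp]

lemma three_to_two (h : ∀ X : 𝒞, IsZero (R.iStar.obj (R.jIns.obj (R.jStar.obj X)))) :
    ∀ Y : ℬ, IsZero (R.iStar.obj (R.jIns.obj Y)) := by
  intro Y
  haveI := R.jIns_full; haveI := R.jIns_faithful
  exact IsZero.of_iso (h (R.jIns.obj Y))
    (R.iStar.mapIso (R.jIns.mapIso (asIso (R.adj₄.counit.app Y)))).symm

end Recollement

/-- The following are equivalent: (a) `i^!` is an exact functor; (b) `i^* j_* = 0`;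
(c) `i^* j_* j^* = 0`. -/
theorem stmt_4 (R : Recollement 𝒜 𝒞 ℬ) :
    List.TFAE
      [Nonempty (PreservesFiniteLimits R.iShriek) ∧
          Nonempty (PreservesFiniteColimits R.iShriek),
        ∀ Y : ℬ, IsZero (R.iStar.obj (R.jIns.obj Y)),
        ∀ X : 𝒞, IsZero (R.iStar.obj (R.jIns.obj (R.jStar.obj X)))] := by
  tfae_have 1 → 2 := R.one_to_two
  tfae_have 2 → 1 := R.two_to_one
  tfae_have 2 → 3 := fun h X => h _
  tfae_have 3 → 2 := R.three_to_two
  tfae_finish
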